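/- arXiv:1105.1427 — 3 statements merged into one kernel-verified Lean document; each statement's English description precedes it below -/
import Mathlib

section
/- Let N ≥ 1, let R be a normalized reduced root system in ℝ^N with positive subsystem R₊ and G-invariant multiplicity function k ≥ 0, and let m_k be the associated weighted measure. Then (ℝ^N, m_k) is a space of homogeneous type: there exists a constant C > 0, depending only on N, R₊ and k, such that m_k(B(x, 2r)) ≤ C m_k(B(x, r)) for every x ∈ ℝ^N and every r > 0, where B(x,r) is the closed ball of center x and radius r. -/
open MeasureTheory Metric Set

/-- The weighted measure `m_k` associated to a positive subsystem `R₊` and a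
multiplicity function `k`: `dm_k(x) = ∏_{α ∈ R₊} |⟨α,x⟩|^{2k(α)} dx`. -/
noncomputable def dunklMeasure (N : ℕ) (Rplus : Finset (EuclideanSpace ℝ (Fin N)))
    (k : EuclideanSpace ℝ (Fin N) → ℝ) : Measure (EuclideanSpace ℝ (Fin N)) :=
  volume.withDensity fun x => ∏ α ∈ Rplus, ENNReal.ofReal (|(inner ℝ α x : ℝ)| ^ (2 * k α))

/-- The group `G` generated by the reflections `σ_α(x) = x − ⟨α,x⟩α`, `α ∈ R`. -/
noncomputable def dunklGroup (N : ℕ) (R : Finset (EuclideanSpace ℝ (Fin N))) :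
    Subgroup (EuclideanSpace ℝ (Fin N) ≃ₗᵢ[ℝ] EuclideanSpace ℝ (Fin N)) :=
  Subgroup.closure {g | ∃ α ∈ R, ∀ x, g x = x - (inner ℝ α x : ℝ) • α}

/-!
On `B(x, 2r)` every `|⟪α, y⟫|` is at most `|⟪α, x⟫| + 2‖α‖r`. Moving the centre away from the
hyperplanes `⟪α, ·⟫ = 0` one root at a time, each move shrinking the radius by a factor `4`,
produces a ball `B' ⊆ B(x, r)` of radius `r / 4 ^ #S` on which every `|⟪α, z⟫|` is at least a fixed
fraction of that bound. So the density `∏ |⟪α, ·⟫| ^ a α` on `B(x, 2r)` is at most a constant times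
its value anywhere on `B'`, and the Lebesgue volumes of `B(x, 2r)` and `B'` differ by the factor
`(2 · 4 ^ #S) ^ N`.
-/

open scoped ENNReal RealInnerProductSpace

section InnerProductSpace

variable {E : Type*} [NormedAddCommGroup E] [InnerProductSpace ℝ E]

lemma abs_inner_le_abs_inner_add_norm_mul_dist (α y x : E) :
    |⟪α, y⟫| ≤ |⟪α, x⟫| + ‖α‖ * dist y x := by
  have hsplit : ⟪α, y⟫ = ⟪α, x⟫ + ⟪α, y - x⟫ := by rw [inner_sub_right]; ring
  rw [hsplit, dist_eq_norm]
  linarith [abs_add_le ⟪α, x⟫ ⟪α, y - x⟫, abs_real_inner_le_norm α (y - x)]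

lemma exists_closedBall_subset_forall_abs_inner_ge_of_inner_nonneg (β x : E) {s : ℝ}
    (hs : 0 ≤ s) (hβx : 0 ≤ ⟪β, x⟫) :
    ∃ x', closedBall x' (s / 4) ⊆ closedBall x s ∧
      ∀ z ∈ closedBall x' (s / 4), ‖β‖ * (s / 4) ≤ |⟪β, z⟫| := by
  rcases eq_or_ne β 0 with rfl | hβ
  · exact ⟨x, closedBall_subset_closedBall (by linarith), by simp⟩
  have hβ' : ‖β‖ ≠ 0 := norm_ne_zero_iff.mpr hβ
  -- moving the centre by `s / 2` in the direction of `β` raises `⟪β, ·⟫` by `‖β‖ * (s / 2)`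
  set x' := x + (s / 2 * ‖β‖⁻¹) • β
  have hdist : dist x' x = s / 2 := by
    rw [dist_self_add_left, norm_smul, Real.norm_of_nonneg (by positivity)]
    field_simp
  have hx' : ⟪β, x'⟫ = ⟪β, x⟫ + ‖β‖ * (s / 2) := by
    rw [inner_add_right, real_inner_smul_right, real_inner_self_eq_norm_sq]
    field_simp
  refine ⟨x', closedBall_subset_closedBall' (by linarith), fun z hz => ?_⟩
  have hz' := abs_inner_le_abs_inner_add_norm_mul_dist β x' z
  rw [dist_comm, abs_of_nonneg (by rw [hx']; positivity), hx'] at hz'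
  nlinarith [mul_le_mul_of_nonneg_left (mem_closedBall.mp hz) (norm_nonneg β)]

lemma exists_closedBall_subset_forall_abs_inner_ge (β x : E) {s : ℝ} (hs : 0 ≤ s) :
    ∃ x', closedBall x' (s / 4) ⊆ closedBall x s ∧
      ∀ z ∈ closedBall x' (s / 4), ‖β‖ * (s / 4) ≤ |⟪β, z⟫| := by
  rcases le_total 0 ⟪β, x⟫ with hβx | hβx
  · exact exists_closedBall_subset_forall_abs_inner_ge_of_inner_nonneg β x hs hβx
  · simpa only [norm_neg, inner_neg_left, abs_neg] using
      exists_closedBall_subset_forall_abs_inner_ge_of_inner_nonneg (-β) x hs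
        (by rwa [inner_neg_left, neg_nonneg])

lemma Finset.exists_closedBall_subset_forall_abs_inner_ge (S : Finset E) (x : E) {r : ℝ}
    (hr : 0 ≤ r) :
    ∃ x', closedBall x' (r / 4 ^ S.card) ⊆ closedBall x r ∧
      ∀ α ∈ S, ∀ z ∈ closedBall x' (r / 4 ^ S.card), ‖α‖ * (r / 4 ^ S.card) ≤ |⟪α, z⟫| := by
  classical
  induction S using Finset.induction_on with
  | empty => exact ⟨x, by simp, by simp⟩
  | insert β S hβS ih =>
    obtain ⟨x₁, hx₁, hS⟩ := ih
    obtain ⟨x₂, hx₂, hβ⟩ :=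
      _root_.exists_closedBall_subset_forall_abs_inner_ge β x₁ (s := r / 4 ^ S.card) (by positivity)
    have hrad : r / 4 ^ (insert β S).card = r / 4 ^ S.card / 4 := by
      rw [Finset.card_insert_of_notMem hβS, pow_succ, div_div]
    rw [hrad]
    refine ⟨x₂, hx₂.trans hx₁, fun α hα z hz => ?_⟩
    rcases Finset.mem_insert.mp hα with rfl | hα
    · exact hβ z hz
    · calc ‖α‖ * (r / 4 ^ S.card / 4) ≤ ‖α‖ * (r / 4 ^ S.card) :=
            mul_le_mul_of_nonneg_left (div_le_self (by positivity) (by norm_num)) (norm_nonneg α)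
        _ ≤ |⟪α, z⟫| := hS α hα z (hx₂ hz)

lemma Finset.exists_closedBall_subset_forall_abs_inner_le_mul (S : Finset E) (x : E) {r : ℝ}
    (hr : 0 ≤ r) :
    ∃ x', closedBall x' (r / 4 ^ S.card) ⊆ closedBall x r ∧
      ∀ α ∈ S, ∀ y ∈ closedBall x (2 * r), ∀ z ∈ closedBall x' (r / 4 ^ S.card),
        |⟪α, y⟫| ≤ 4 ^ (S.card + 1) * |⟪α, z⟫| := by
  obtain ⟨x', hsub, hgood⟩ := S.exists_closedBall_subset_forall_abs_inner_ge x hr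
  refine ⟨x', hsub, fun α hα y hy z hz => ?_⟩
  have hq : (1 : ℝ) ≤ 4 ^ S.card := one_le_pow₀ (by norm_num)
  have hy' := abs_inner_le_abs_inner_add_norm_mul_dist α y x
  have hx' := abs_inner_le_abs_inner_add_norm_mul_dist α x z
  have hyx := mul_le_mul_of_nonneg_left (mem_closedBall.mp hy) (norm_nonneg α)
  have hzx := mul_le_mul_of_nonneg_left (mem_closedBall.mp (hsub hz)) (norm_nonneg α)
  have hmargin : ‖α‖ * r ≤ 4 ^ S.card * |⟪α, z⟫| := by
    have := hgood α hα z hz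
    rw [mul_div_assoc', div_le_iff₀ (by positivity)] at this
    linarith
  rw [dist_comm] at hx'
  rw [pow_succ]
  -- `|⟪α, y⟫| ≤ |⟪α, z⟫| + 3‖α‖r ≤ (1 + 3 · 4 ^ #S) |⟪α, z⟫|`
  nlinarith [abs_nonneg ⟪α, z⟫]

noncomputable def rootWeight (S : Finset E) (a : E → ℝ) (y : E) : ℝ≥0∞ :=
  ∏ α ∈ S, ENNReal.ofReal (|⟪α, y⟫| ^ a α)

lemma rootWeight_le_mul {S : Finset E} {a : E → ℝ} {y z : E} {L : ℝ} (hL : 0 ≤ L)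
    (ha : ∀ α ∈ S, 0 ≤ a α) (h : ∀ α ∈ S, |⟪α, y⟫| ≤ L * |⟪α, z⟫|) :
    rootWeight S a y ≤ (∏ α ∈ S, ENNReal.ofReal (L ^ a α)) * rootWeight S a z := by
  rw [rootWeight, rootWeight, ← Finset.prod_mul_distrib]
  refine Finset.prod_le_prod' fun α hα => ?_
  rw [← ENNReal.ofReal_mul (by positivity), ← Real.mul_rpow hL (abs_nonneg _)]
  exact ENNReal.ofReal_le_ofReal (Real.rpow_le_rpow (abs_nonneg _) (h α hα) (ha α hα))

end InnerProductSpace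

theorem MeasureTheory.Measure.withDensity_apply_mul_le {X : Type*} [MeasurableSpace X]
    (ν : Measure X) (w : X → ℝ≥0∞) {A B : Set X} (hA : MeasurableSet A) (hB : MeasurableSet B)
    {K : ℝ≥0∞} (hK : K ≠ ∞) (h : ∀ y ∈ A, ∀ z ∈ B, w y ≤ K * w z) :
    ν.withDensity w A * ν B ≤ K * ν.withDensity w B * ν A := by
  rw [withDensity_apply _ hA, withDensity_apply _ hB]
  have hpoint : ∀ y ∈ A, w y * ν B ≤ K * ∫⁻ z in B, w z ∂ν := fun y hy =>
    calc w y * ν B = ∫⁻ _ in B, w y ∂ν := (setLIntegral_const _ _).symm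
      _ ≤ ∫⁻ z in B, K * w z ∂ν := setLIntegral_mono' hB (h y hy)
      _ = K * ∫⁻ z in B, w z ∂ν := lintegral_const_mul' _ _ hK
  calc (∫⁻ y in A, w y ∂ν) * ν B ≤ ∫⁻ y in A, w y * ν B ∂ν := lintegral_mul_const_le _ _
    _ ≤ ∫⁻ _ in A, K * ∫⁻ z in B, w z ∂ν ∂ν := setLIntegral_mono' hA hpoint
    _ = K * (∫⁻ z in B, w z ∂ν) * ν A := setLIntegral_const _ _

theorem exists_withDensity_rootWeight_closedBall_two_mul_le {E : Type*} [NormedAddCommGroup E]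
    [InnerProductSpace ℝ E] [FiniteDimensional ℝ E] [MeasurableSpace E] [BorelSpace E]
    (μ : Measure E) [μ.IsAddHaarMeasure] (S : Finset E) {a : E → ℝ} (ha : ∀ α ∈ S, 0 ≤ a α) :
    ∃ C : ℝ, 0 < C ∧ ∀ (x : E) (r : ℝ), 0 < r →
      μ.withDensity (rootWeight S a) (closedBall x (2 * r)) ≤
        ENNReal.ofReal C * μ.withDensity (rootWeight S a) (closedBall x r) := by
  set L : ℝ := 4 ^ (S.card + 1)
  set q : ℝ := (2 * 4 ^ S.card) ^ Module.finrank ℝ E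
  refine ⟨(∏ α ∈ S, L ^ a α) * q, by positivity, fun x r hr => ?_⟩
  obtain ⟨x', hsub, hcomp⟩ := S.exists_closedBall_subset_forall_abs_inner_le_mul x hr.le
  have hvol : μ (closedBall x (2 * r)) = ENNReal.ofReal q * μ (closedBall x' (r / 4 ^ S.card)) := by
    rw [μ.addHaar_closedBall' x (by positivity : (0 : ℝ) ≤ 2 * r),
      μ.addHaar_closedBall' x' (by positivity : (0 : ℝ) ≤ r / 4 ^ S.card), ← mul_assoc,
      ← ENNReal.ofReal_mul (by positivity), ← mul_pow]
    field_simp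
  have hweight := μ.withDensity_apply_mul_le (rootWeight S a) measurableSet_closedBall
    measurableSet_closedBall (K := ∏ α ∈ S, ENNReal.ofReal (L ^ a α))
    (ENNReal.prod_ne_top fun _ _ => ENNReal.ofReal_ne_top)
    fun y hy z hz => rootWeight_le_mul (by positivity) ha fun α hα => hcomp α hα y hy z hz
  rw [hvol] at hweight
  rw [← ENNReal.mul_le_mul_iff_left
    (measure_closedBall_pos μ x' (by positivity : 0 < r / 4 ^ S.card)).ne'
    measure_closedBall_lt_top.ne]
  calc _ ≤ _ := hweight
    _ = ENNReal.ofReal ((∏ α ∈ S, L ^ a α) * q) *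
          μ.withDensity (rootWeight S a) (closedBall x' (r / 4 ^ S.card)) *
          μ (closedBall x' (r / 4 ^ S.card)) := by
      rw [ENNReal.ofReal_mul (by positivity),
        ENNReal.ofReal_prod_of_nonneg fun _ _ => by positivity]
      ring
    _ ≤ _ := by gcongr

theorem dunklMeasure_doubling_general
    (N : ℕ)
    (R Rplus : Finset (EuclideanSpace ℝ (Fin N)))
    (k : EuclideanSpace ℝ (Fin N) → ℝ)
    -- `R₊` is a positive subsystem: `R` is the disjoint union of `R₊` and `−R₊`:
    (hRplus : ∀ α : EuclideanSpace ℝ (Fin N), α ∈ R ↔ (α ∈ Rplus ∨ -α ∈ Rplus))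
    -- `k` is a nonnegative `G`-invariant multiplicity function:
    (hk : ∀ α ∈ R, 0 ≤ k α) :
    ∃ C : ℝ, 0 < C ∧ ∀ (x : EuclideanSpace ℝ (Fin N)) (r : ℝ), 0 < r →
      dunklMeasure N Rplus k (closedBall x (2 * r)) ≤
        ENNReal.ofReal C * dunklMeasure N Rplus k (closedBall x r) :=
  exists_withDensity_rootWeight_closedBall_two_mul_le volume Rplus (a := fun α => 2 * k α)
    fun α hα => mul_nonneg zero_le_two (hk α ((hRplus α).mpr (Or.inl hα)))

/-- `(ℝ^N, m_k)` is a space of homogeneous type: the measure `m_k` is doubling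
on closed balls. -/
theorem dunklMeasure_doubling
    (N : ℕ) (hN : 1 ≤ N)
    (R Rplus : Finset (EuclideanSpace ℝ (Fin N)))
    (k : EuclideanSpace ℝ (Fin N) → ℝ)
    -- `R` is a normalized reduced root system:
    (hR0 : (0 : EuclideanSpace ℝ (Fin N)) ∉ R)
    (hRnorm : ∀ α ∈ R, (inner ℝ α α : ℝ) = 2)
    (hRrefl : ∀ α ∈ R, ∀ β ∈ R, β - (inner ℝ α β : ℝ) • α ∈ R)
    -- `R₊` is a positive subsystem: `R` is the disjoint union of `R₊` and `−R₊`: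
    (hRplus : ∀ α : EuclideanSpace ℝ (Fin N), α ∈ R ↔ (α ∈ Rplus ∨ -α ∈ Rplus))
    (hRplusDisj : ∀ α ∈ Rplus, -α ∉ Rplus)
    -- `k` is a nonnegative `G`-invariant multiplicity function:
    (hk : ∀ α ∈ R, 0 ≤ k α)
    (hkG : ∀ g ∈ dunklGroup N R, ∀ α ∈ R,
      k ((g : EuclideanSpace ℝ (Fin N) ≃ₗᵢ[ℝ] EuclideanSpace ℝ (Fin N)) α) = k α) :
    ∃ C : ℝ, 0 < C ∧ ∀ (x : EuclideanSpace ℝ (Fin N)) (r : ℝ), 0 < r →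
      dunklMeasure N Rplus k (closedBall x (2 * r)) ≤
        ENNReal.ofReal C * dunklMeasure N Rplus k (closedBall x r) :=
  dunklMeasure_doubling_general N R Rplus k hRplus hk
end

section
/- Let N ≥ 1, let G be a finite subgroup of the orthogonal group O(N) acting on ℝ^N, let x, y ∈ ℝ^N, and let η belong to the convex hull of the orbit G·x = {g·x : g ∈ G}. Then ‖x‖² + ‖y‖² − 2⟨y,η⟩ = ‖y−η‖² + ‖x‖² − ‖η‖² ≥ 0, and with A(x,y,η) := √(‖x‖² + ‖y‖² − 2⟨y,η⟩) one has min_{g∈G} ‖g·x − y‖ ≤ A(x,y,η) ≤ max_{g∈G} ‖g·x − y‖. -/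
/-! On the sphere of radius `‖x‖`, which contains the orbit `G·x`, the function `z ↦ ‖z - y‖²`
agrees with the affine function `‖x‖² + ‖y‖² - 2⟪y, z⟫`. An affine function takes on the convex
hull of a set only values between its extreme values on the set, so its value at `η` is squeezed
between `‖g x - y‖²` for two suitable elements `g` of `G`. -/

open Set

section

variable {E : Type*} [NormedAddCommGroup E] [InnerProductSpace ℝ E]

theorem norm_sub_sq_eq_of_norm_eq {z : E} {r : ℝ} (hz : ‖z‖ = r) (y : E) :
    ‖z - y‖ ^ 2 = r ^ 2 + ‖y‖ ^ 2 - 2 * inner ℝ y z := by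
  rw [norm_sub_sq_real, hz, real_inner_comm]
  ring

theorem exists_norm_sub_sq_le_of_mem_convexHull {s : Set E} {r : ℝ} (hs : ∀ z ∈ s, ‖z‖ = r)
    {η : E} (hη : η ∈ convexHull ℝ s) (y : E) :
    ∃ z ∈ s, ‖z - y‖ ^ 2 ≤ r ^ 2 + ‖y‖ ^ 2 - 2 * inner ℝ y η := by
  obtain ⟨z, hz, hle⟩ :=
    ((innerₗ E y).convexOn convex_univ).exists_ge_of_mem_convexHull (subset_univ s) hη
  refine ⟨z, hz, ?_⟩
  rw [norm_sub_sq_eq_of_norm_eq (hs z hz)]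
  simp only [innerₗ_apply_apply] at hle
  linarith

theorem exists_le_norm_sub_sq_of_mem_convexHull {s : Set E} {r : ℝ} (hs : ∀ z ∈ s, ‖z‖ = r)
    {η : E} (hη : η ∈ convexHull ℝ s) (y : E) :
    ∃ z ∈ s, r ^ 2 + ‖y‖ ^ 2 - 2 * inner ℝ y η ≤ ‖z - y‖ ^ 2 := by
  obtain ⟨z, hz, hle⟩ :=
    ((innerₗ E y).concaveOn convex_univ).exists_le_of_mem_convexHull (subset_univ s) hη
  refine ⟨z, hz, ?_⟩
  rw [norm_sub_sq_eq_of_norm_eq (hs z hz)]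
  simp only [innerₗ_apply_apply] at hle
  linarith

end

theorem A_between_min_and_max_orbit_dist_general
    (N : ℕ)
    (G : Subgroup (EuclideanSpace ℝ (Fin N) ≃ₗᵢ[ℝ] EuclideanSpace ℝ (Fin N)))
    (hGfin : Finite G)
    (x y η : EuclideanSpace ℝ (Fin N))
    (hη : η ∈ convexHull ℝ
      ((fun g : G => (g : EuclideanSpace ℝ (Fin N) ≃ₗᵢ[ℝ] EuclideanSpace ℝ (Fin N)) x) ''
        univ)) :
    (‖x‖ ^ 2 + ‖y‖ ^ 2 - 2 * (inner ℝ y η : ℝ) = ‖y - η‖ ^ 2 + ‖x‖ ^ 2 - ‖η‖ ^ 2) ∧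
    (0 ≤ ‖x‖ ^ 2 + ‖y‖ ^ 2 - 2 * (inner ℝ y η : ℝ)) ∧
    ((⨅ g : G, ‖(g : EuclideanSpace ℝ (Fin N) ≃ₗᵢ[ℝ] EuclideanSpace ℝ (Fin N)) x - y‖) ≤
        Real.sqrt (‖x‖ ^ 2 + ‖y‖ ^ 2 - 2 * (inner ℝ y η : ℝ))) ∧
    (Real.sqrt (‖x‖ ^ 2 + ‖y‖ ^ 2 - 2 * (inner ℝ y η : ℝ)) ≤
      ⨆ g : G, ‖(g : EuclideanSpace ℝ (Fin N) ≃ₗᵢ[ℝ] EuclideanSpace ℝ (Fin N)) x - y‖) := by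
  have horbit : ∀ z ∈ (fun g : G =>
      (g : EuclideanSpace ℝ (Fin N) ≃ₗᵢ[ℝ] EuclideanSpace ℝ (Fin N)) x) '' univ, ‖z‖ = ‖x‖ := by
    rintro _ ⟨g, -, rfl⟩
    exact LinearIsometryEquiv.norm_map _ x
  obtain ⟨_, ⟨gmax, -, rfl⟩, hmax⟩ := exists_norm_sub_sq_le_of_mem_convexHull horbit hη y
  obtain ⟨_, ⟨gmin, -, rfl⟩, hmin⟩ := exists_le_norm_sub_sq_of_mem_convexHull horbit hη y
  refine ⟨by rw [norm_sub_sq_real]; ring, (sq_nonneg _).trans hmax, ?_, ?_⟩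
  · exact ciInf_le_of_le ⟨0, by rintro _ ⟨g, rfl⟩; positivity⟩ gmax (Real.le_sqrt_of_sq_le hmax)
  · exact le_ciSup_of_le (Finite.bddAbove_range _) gmin
      ((Real.sqrt_le_left (norm_nonneg _)).2 hmin)

/-- for `η` in the convex hull of the orbit `G·x` of a finite subgroup `G` of
the orthogonal group, the quantity `‖x‖² + ‖y‖² − 2⟨y,η⟩ = ‖y−η‖² + ‖x‖² − ‖η‖²` is
nonnegative, and `A(x,y,η) = √(‖x‖² + ‖y‖² − 2⟨y,η⟩)` lies between
`min_{g∈G} ‖g·x − y‖` and `max_{g∈G} ‖g·x − y‖`. -/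
theorem A_between_min_and_max_orbit_dist
    (N : ℕ) (hN : 1 ≤ N)
    (G : Subgroup (EuclideanSpace ℝ (Fin N) ≃ₗᵢ[ℝ] EuclideanSpace ℝ (Fin N)))
    (hGfin : Finite G)
    (x y η : EuclideanSpace ℝ (Fin N))
    (hη : η ∈ convexHull ℝ
      ((fun g : G => (g : EuclideanSpace ℝ (Fin N) ≃ₗᵢ[ℝ] EuclideanSpace ℝ (Fin N)) x) ''
        univ)) :
    (‖x‖ ^ 2 + ‖y‖ ^ 2 - 2 * (inner ℝ y η : ℝ) = ‖y - η‖ ^ 2 + ‖x‖ ^ 2 - ‖η‖ ^ 2) ∧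
    (0 ≤ ‖x‖ ^ 2 + ‖y‖ ^ 2 - 2 * (inner ℝ y η : ℝ)) ∧
    ((⨅ g : G, ‖(g : EuclideanSpace ℝ (Fin N) ≃ₗᵢ[ℝ] EuclideanSpace ℝ (Fin N)) x - y‖) ≤
        Real.sqrt (‖x‖ ^ 2 + ‖y‖ ^ 2 - 2 * (inner ℝ y η : ℝ))) ∧
    (Real.sqrt (‖x‖ ^ 2 + ‖y‖ ^ 2 - 2 * (inner ℝ y η : ℝ)) ≤
      ⨆ g : G, ‖(g : EuclideanSpace ℝ (Fin N) ≃ₗᵢ[ℝ] EuclideanSpace ℝ (Fin N)) x - y‖) :=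
  A_between_min_and_max_orbit_dist_general N G hGfin x y η hη
end

section
/- Let N ≥ 1, let G be a finite subgroup of the orthogonal group O(N) acting on ℝ^N, let x, y, y₀ ∈ ℝ^N satisfy min_{g∈G} ‖g·x − y‖ > 2‖y − y₀‖. Then for every t ∈ [0,1] and every η in the convex hull of the orbit G·x = {g·x : g ∈ G}, setting y_t = y₀ + t(y − y₀), one has ‖y − y₀‖ < A(x, y_t, η), where A(x,y,η) := √(‖x‖² + ‖y‖² − 2⟨y,η⟩). -/
/-!
The quantity under the square root is `‖g x - y_t‖²` when `η = g x` is a vertex of the orbit,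
and it is affine in `η`, so it suffices to bound it at the vertices. There the triangle inequality
through `y` gives `‖g x - y_t‖ ≥ ‖g x - y‖ - ‖y - y_t‖ > 2‖y - y₀‖ - ‖y - y₀‖`.
-/

open Set

section InnerProductSpace

variable {E : Type*} [NormedAddCommGroup E] [InnerProductSpace ℝ E]

theorem convex_setOf_lt_sq_add_sq_sub_inner (c r : ℝ) (v : E) :
    Convex ℝ {w : E | c < r ^ 2 + ‖v‖ ^ 2 - 2 * inner ℝ v w} := by
  have hset : {w : E | c < r ^ 2 + ‖v‖ ^ 2 - 2 * inner ℝ v w} =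
      {w | innerₛₗ ℝ v w < (r ^ 2 + ‖v‖ ^ 2 - c) / 2} := by
    ext w
    simp only [mem_ofPred_eq, innerₛₗ_apply_apply]
    constructor <;> intro <;> linarith
  rw [hset]
  exact convex_halfSpace_lt (innerₛₗ ℝ v).isLinear _

theorem lt_sq_add_sq_sub_inner_of_mem_convexHull {s : Set E} {c r : ℝ} {v : E}
    (hs : ∀ w ∈ s, ‖w‖ = r ∧ c < ‖w - v‖ ^ 2) {η : E} (hη : η ∈ convexHull ℝ s) :
    c < r ^ 2 + ‖v‖ ^ 2 - 2 * inner ℝ v η := by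
  refine convexHull_min (fun w hw => ?_) (convex_setOf_lt_sq_add_sq_sub_inner c r v) hη
  obtain ⟨hwr, hcw⟩ := hs w hw
  rw [norm_sub_sq_real, hwr, real_inner_comm] at hcw
  show c < _
  linarith

end InnerProductSpace

theorem norm_sub_add_smul_sub_le {E : Type*} [SeminormedAddCommGroup E] [NormedSpace ℝ E]
    (y y₀ : E) {t : ℝ} (ht : t ∈ Icc (0 : ℝ) 1) :
    ‖y - (y₀ + t • (y - y₀))‖ ≤ ‖y - y₀‖ := by
  have hyt : y - (y₀ + t • (y - y₀)) = (1 - t) • (y - y₀) := by module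
  rw [hyt, norm_smul, Real.norm_of_nonneg (sub_nonneg.2 ht.2)]
  exact mul_le_of_le_one_left (norm_nonneg _) (by linarith [ht.1])

theorem lt_norm_sub_of_two_mul_lt {E : Type*} [SeminormedAddCommGroup E] {p y z : E} {d : ℝ}
    (hp : 2 * d < ‖p - y‖) (hz : ‖y - z‖ ≤ d) : d < ‖p - z‖ := by
  linarith [norm_sub_le_norm_sub_add_norm_sub p z y, norm_sub_rev z y]

theorem dist_lt_A_on_segment_general
    (N : ℕ)
    (G : Subgroup (EuclideanSpace ℝ (Fin N) ≃ₗᵢ[ℝ] EuclideanSpace ℝ (Fin N)))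
    (x y y₀ : EuclideanSpace ℝ (Fin N))
    (hsep : 2 * ‖y - y₀‖ <
      ⨅ g : G, ‖(g : EuclideanSpace ℝ (Fin N) ≃ₗᵢ[ℝ] EuclideanSpace ℝ (Fin N)) x - y‖) :
    ∀ t ∈ Set.Icc (0 : ℝ) 1,
      ∀ η ∈ convexHull ℝ
        ((fun g : G => (g : EuclideanSpace ℝ (Fin N) ≃ₗᵢ[ℝ] EuclideanSpace ℝ (Fin N)) x) ''
          univ),
        ‖y - y₀‖ <
          Real.sqrt (‖x‖ ^ 2 + ‖y₀ + t • (y - y₀)‖ ^ 2 -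
            2 * (inner ℝ (y₀ + t • (y - y₀)) η : ℝ)) := by
  intro t ht η hη
  rw [Real.lt_sqrt (norm_nonneg _)]
  refine lt_sq_add_sq_sub_inner_of_mem_convexHull ?_ hη
  rintro _ ⟨g, -, rfl⟩
  have hbdd : BddBelow (range fun g : G => ‖(g : EuclideanSpace ℝ (Fin N) ≃ₗᵢ[ℝ] _) x - y‖) :=
    ⟨0, by rintro _ ⟨g, rfl⟩; positivity⟩
  have hfar := lt_norm_sub_of_two_mul_lt (hsep.trans_le (ciInf_le hbdd g))
    (norm_sub_add_smul_sub_le y y₀ ht)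
  exact ⟨LinearIsometryEquiv.norm_map g.1 x,
    pow_lt_pow_left₀ hfar (norm_nonneg _) two_ne_zero⟩

/-- if `min_{g∈G} ‖g·x − y‖ > 2‖y − y₀‖` then, for every `t ∈ [0,1]` and
every `η` in the convex hull of the orbit `G·x`, one has
`‖y − y₀‖ < A(x, y_t, η)` where `y_t = y₀ + t(y − y₀)` and
`A(x,y,η) = √(‖x‖² + ‖y‖² − 2⟨y,η⟩)`. -/
theorem dist_lt_A_on_segment
    (N : ℕ) (hN : 1 ≤ N)
    (G : Subgroup (EuclideanSpace ℝ (Fin N) ≃ₗᵢ[ℝ] EuclideanSpace ℝ (Fin N)))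
    (hGfin : Finite G)
    (x y y₀ : EuclideanSpace ℝ (Fin N))
    (hsep : 2 * ‖y - y₀‖ <
      ⨅ g : G, ‖(g : EuclideanSpace ℝ (Fin N) ≃ₗᵢ[ℝ] EuclideanSpace ℝ (Fin N)) x - y‖) :
    ∀ t ∈ Set.Icc (0 : ℝ) 1,
      ∀ η ∈ convexHull ℝ
        ((fun g : G => (g : EuclideanSpace ℝ (Fin N) ≃ₗᵢ[ℝ] EuclideanSpace ℝ (Fin N)) x) ''
          univ),
        ‖y - y₀‖ <
          Real.sqrt (‖x‖ ^ 2 + ‖y₀ + t • (y - y₀)‖ ^ 2 -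
            2 * (inner ℝ (y₀ + t • (y - y₀)) η : ℝ)) :=
  dist_lt_A_on_segment_general N G x y y₀ hsep
end
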